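/- One has e² = −1, η·η̄ = −2·(1 − i·e), and the left ideal η·C := {η·w : w ∈ C} satisfies η·C = (1 − i·e)·C = {w ∈ C : e·w = i·w}, the i-eigenspace of left Clifford multiplication by e. (This shows that the Kuga–Satake complex structure, given by left multiplication by e, coincides with the complex structure whose (1,0)-part is the left ideal generated by a generator η of H^{2,0}.) -/
import Mathlib


open scoped TensorProduct

noncomputable section

variable (V : Type) [AddCommGroup V] [Module ℝ V] [FiniteDimensional ℝ V]

/-- The inclusion of `V` into `V_ℂ = ℂ ⊗[ℝ] V`. -/
def inclV : V →ₗ[ℝ] ℂ ⊗[ℝ] V := TensorProduct.mk ℝ ℂ V 1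

variable (BC : (ℂ ⊗[ℝ] V) →ₗ[ℂ] (ℂ ⊗[ℝ] V) →ₗ[ℂ] ℂ)

/-- The quadratic form `Q(v) := −⟨v,v⟩` on `V_ℂ`. -/
def QF : QuadraticForm ℂ (ℂ ⊗[ℝ] V) := LinearMap.BilinMap.toQuadraticMap (-BC)

lemma aux_ks {A : Type*} [Ring A] [Algebra ℂ A] (a b : A)
    (ha : a * a = -1) (hb : b * b = -1) (hab : a * b = -(b * a)) :
    (b*a) * (b*a) = -1 ∧
    (a + Complex.I • b) * (a - Complex.I • b) = (-2:ℂ) • (1 - Complex.I • (b*a)) ∧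
    ({z : A | ∃ w, z = (a + Complex.I • b) * w} =
      {z : A | ∃ w, z = (1 - Complex.I • (b*a)) * w}) ∧
    ({z : A | ∃ w, z = (a + Complex.I • b) * w} =
      {w : A | (b*a) * w = Complex.I • w}) := by
  set η := a + Complex.I • b with hη
  have hbab : b * (a * b) = a := by
    rw [hab]; rw [mul_neg, ← mul_assoc, hb]; simp
  have h1 : (b*a) * (b*a) = -1 := by
    rw [mul_assoc, ← mul_assoc a b a, hab]
    simp only [neg_mul, mul_neg, ← mul_assoc, hb]
    simp [mul_assoc, ha]
  have heη : (b*a) * η = Complex.I • η := by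
    rw [hη]
    simp only [mul_add, mul_smul_comm, smul_add, smul_smul, Complex.I_mul_I]
    rw [mul_assoc b a a, ha, mul_assoc b a b, hbab]
    simp only [mul_neg, mul_one, neg_one_smul]
    abel
  have h2 : η * (a - Complex.I • b) = (-2:ℂ) • (1 - Complex.I • (b*a)) := by
    rw [hη]
    simp only [mul_sub, sub_mul, add_mul, mul_smul_comm, smul_mul_assoc,
      smul_sub, smul_smul, Complex.I_mul_I, ha, hb, hab]
    match_scalars <;> simp [Complex.I_sq] <;> ring
  have h3 : (1 - Complex.I • (b*a)) * η = (2:ℂ) • η := by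
    rw [sub_mul, one_mul, smul_mul_assoc, heη, smul_smul, Complex.I_mul_I]
    module
  have h4 : η * ((-1/2 : ℂ) • (a - Complex.I • b)) = 1 - Complex.I • (b*a) := by
    rw [mul_smul_comm, h2, smul_smul]
    norm_num
  refine ⟨h1, h2, ?_, ?_⟩
  · ext z
    simp only [Set.mem_setOf_eq]
    constructor
    · rintro ⟨w, rfl⟩
      exact ⟨(1/2 : ℂ) • (η * w), by
        rw [mul_smul_comm, ← mul_assoc, h3, smul_mul_assoc, smul_smul]; norm_num⟩
    · rintro ⟨w, rfl⟩
      exact ⟨((-1/2 : ℂ) • (a - Complex.I • b)) * w, by rw [← mul_assoc, h4]⟩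
  · ext z
    simp only [Set.mem_setOf_eq]
    constructor
    · rintro ⟨w, rfl⟩
      rw [← mul_assoc, heη, smul_mul_assoc]
    · intro hz
      have h5 : (1 - Complex.I • (b*a)) * z = (2:ℂ) • z := by
        rw [sub_mul, one_mul, smul_mul_assoc, hz, smul_smul, Complex.I_mul_I]
        module
      refine ⟨((-1/2 : ℂ) • (a - Complex.I • b)) * ((1/2 : ℂ) • z), ?_⟩
      rw [← mul_assoc, h4, mul_smul_comm, h5, smul_smul]
      norm_num

/-- Let `V` be a real vector space with a symmetric bilinear form `⟨,⟩`,
`C` the Clifford algebra of `V_ℂ := ℂ ⊗ V` for the quadratic form `Q(v) = −⟨v,v⟩` (with the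
`ℂ`-bilinear extension `BC` of `⟨,⟩`), and let `e₁, e₂ ∈ V` be orthonormal. Setting
`η := ι(e₁) + i·ι(e₂)`, `η̄ := ι(e₁) − i·ι(e₂)` and `e := ι(e₂)·ι(e₁)`, one has `e² = −1`,
`η·η̄ = −2(1 − i·e)`, and the left ideal `η·C` equals `(1 − i·e)·C` and equals the
`i`-eigenspace of left Clifford multiplication by `e`: the Kuga-Satake complex structure
(left multiplication by `e`) coincides with the complex structure whose `(1,0)`-part is the
left ideal generated by a generator `η` of `H^{2,0}`. -/
theorem kuga_satake_complex_structure
    (B : V →ₗ[ℝ] V →ₗ[ℝ] ℝ) (hB_symm : ∀ x y : V, B x y = B y x)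
    (hBC : ∀ a b : V, BC (inclV V a) (inclV V b) = (B a b : ℂ))
    (hBC_symm : ∀ x y, BC x y = BC y x)
    (e₁ e₂ : V) (h11 : B e₁ e₁ = 1) (h22 : B e₂ e₂ = 1) (h12 : B e₁ e₂ = 0) :
    letI C := CliffordAlgebra (QF V BC)
    letI ι : ℂ ⊗[ℝ] V →ₗ[ℂ] C := CliffordAlgebra.ι (QF V BC)
    letI η : C := ι (inclV V e₁) + Complex.I • ι (inclV V e₂)
    letI ηbar : C := ι (inclV V e₁) - Complex.I • ι (inclV V e₂)
    letI e : C := ι (inclV V e₂) * ι (inclV V e₁)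
    e * e = -1 ∧
    η * ηbar = (-2 : ℂ) • (1 - Complex.I • e) ∧
    {z : C | ∃ w : C, z = η * w} = {z : C | ∃ w : C, z = (1 - Complex.I • e) * w} ∧
    {z : C | ∃ w : C, z = η * w} = {w : C | e * w = Complex.I • w} := by
  set ι' : ℂ ⊗[ℝ] V →ₗ[ℂ] CliffordAlgebra (QF V BC) := CliffordAlgebra.ι (QF V BC) with hι
  have hQ : ∀ v : V, QF V BC (inclV V v) = -(B v v : ℂ) := by
    intro v
    simp [QF, LinearMap.BilinMap.toQuadraticMap_apply, hBC]
  have ha : ι' (inclV V e₁) * ι' (inclV V e₁) = -1 := by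
    rw [hι, CliffordAlgebra.ι_sq_scalar, hQ, h11]
    simp
  have hb : ι' (inclV V e₂) * ι' (inclV V e₂) = -1 := by
    rw [hι, CliffordAlgebra.ι_sq_scalar, hQ, h22]
    simp
  have hab : ι' (inclV V e₁) * ι' (inclV V e₂) = -(ι' (inclV V e₂) * ι' (inclV V e₁)) := by
    have h := CliffordAlgebra.ι_mul_ι_add_swap (Q := QF V BC) (inclV V e₁) (inclV V e₂)
    have hp : QuadraticMap.polar (QF V BC) (inclV V e₁) (inclV V e₂) = 0 := by
      rw [QF, LinearMap.BilinMap.polar_toQuadraticMap]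
      simp [hBC, h12, hB_symm e₂ e₁]
    rw [hp, map_zero] at h
    exact eq_neg_of_add_eq_zero_left h
  exact aux_ks (ι' (inclV V e₁)) (ι' (inclV V e₂)) ha hb hab
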